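/- arXiv:1708.05578 — 6 statements merged into one kernel-verified Lean document; each statement's English description precedes it below -/
import Mathlib

section
/- Let p be a positive integer. If f(z) = ∑_{k=0}^∞ a_k z^{pk} converges for all z in the unit disk 𝔻 and |f(z)| ≤ 1 for all z ∈ 𝔻, then ∑_{k=0}^∞ |a_k| r^{pk} ≤ 1 for all r with 0 ≤ r ≤ 3^{−1/p}. -/
/-!
Substituting `w = z ^ p` reduces the statement to `p = 1`: a power series `F = ∑ aₙ wⁿ` bounded
by `1` on the unit disc. On the circle `|w| = s`, choose `λ` of modulus one with `λ a₀ = |a₀|`;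
then `u = 1 - Re (λ F)` is nonnegative, its mean is `1 - |a₀|` and its `k`-th Fourier coefficient
is `-λ aₖ sᵏ / 2`, whence Wiener's inequality `|aₖ| ≤ 2 (1 - |a₀|)` for `k ≥ 1`. Summing,
`∑ |aₙ| tⁿ ≤ |a₀| + 2 (1 - |a₀|) t / (1 - t) ≤ 1` as soon as `t ≤ 1/3`.
-/

open Complex ComplexConjugate MeasureTheory AddCircle Filter Topology

namespace AddCircle

variable {T : ℝ}

theorem fourier_natCast_apply (n : ℕ) (x : AddCircle T) : fourier n x = fourier 1 x ^ n := by
  rw [fourier_apply, fourier_apply, natCast_zsmul, toCircle_nsmul, one_zsmul, Circle.coe_pow]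

variable [Fact (0 < T)]

theorem fourierCoeff_conj (g : AddCircle T → ℂ) (k : ℤ) :
    fourierCoeff (fun x => conj (g x)) k = conj (fourierCoeff g (-k)) := by
  simp only [fourierCoeff, smul_eq_mul, ← integral_conj, map_mul, ← fourier_neg, neg_neg]

theorem fourierCoeff_one (n : ℤ) :
    fourierCoeff (fun _ : AddCircle T => (1 : ℂ)) n = (Pi.single 0 1 : ℤ → ℂ) n := by
  have h1 : (fun _ : AddCircle T => (1 : ℂ)) = fourier 0 := funext fun _ => fourier_zero.symm
  rw [h1, fourierCoeff_fourier]

theorem fourierCoeff_tsum_mul_fourier {ι : Type*} [Countable ι] (b : ι → ℂ) (e : ι → ℤ)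
    (hb : Summable fun i => ‖b i‖) (m : ℤ) :
    fourierCoeff (fun x : AddCircle T => ∑' i, b i * fourier (e i) x) m
      = ∑' i, b i * (Pi.single (e i) 1 : ℤ → ℂ) m := by
  have hint : ∀ i, Integrable (fun x : AddCircle T => fourier (-m) x • (b i * fourier (e i) x))
      haarAddCircle := fun i =>
    (((fourier (e i)).continuous.const_mul (b i)).integrable_of_hasCompactSupport
      (HasCompactSupport.of_compactSpace _)).fourier_smul (-m)
  have hnorm : ∀ i, ∫ x : AddCircle T, ‖fourier (-m) x • (b i * fourier (e i) x)‖ ∂haarAddCircle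
      = ‖b i‖ := by
    intro i
    simp [fourier_apply, Circle.norm_coe]
  calc _ = ∫ x, ∑' i, fourier (-m) x • (b i * fourier (e i) x) ∂haarAddCircle := by
        simp only [fourierCoeff, smul_eq_mul, tsum_mul_left]
    _ = ∑' i, fourierCoeff (fun x : AddCircle T => b i * fourier (e i) x) m :=
        (integral_tsum_of_summable_integral_norm hint (by simpa only [hnorm] using hb)).symm
    _ = _ := by simp only [fourierCoeff.const_mul, fourierCoeff_fourier]

theorem fourierCoeff_ofReal_zero (u : AddCircle T → ℝ) :
    fourierCoeff (fun x => (u x : ℂ)) 0 = ↑(∫ x, u x ∂haarAddCircle) := by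
  simp [fourierCoeff, integral_complex_ofReal]

theorem norm_fourierCoeff_ofReal_le_integral {u : AddCircle T → ℝ} (hu : 0 ≤ u) (n : ℤ) :
    ‖fourierCoeff (fun x => (u x : ℂ)) n‖ ≤ ∫ x, u x ∂haarAddCircle :=
  (norm_integral_le_integral_norm _).trans_eq <| integral_congr_ae <| ae_of_all _ fun x => by
    simp [fourier_apply, Circle.norm_coe, abs_of_nonneg (hu x)]

theorem fourierCoeff_ofReal_one_sub_re_mul {g : AddCircle T → ℂ}
    (hg : Integrable g haarAddCircle) (l : ℂ) (n : ℤ) :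
    fourierCoeff (fun x => ((1 - (l * g x).re : ℝ) : ℂ)) n
      = (Pi.single 0 1 : ℤ → ℂ) n - l / 2 * fourierCoeff g n
        - conj l / 2 * conj (fourierCoeff g (-n)) := by
  have hsplit : (fun x => ((1 - (l * g x).re : ℝ) : ℂ)) = (fun _ => 1) +
      ((fun x => -(l / 2) * g x) + fun x => -(conj l / 2) * conj (g x)) := by
    ext x
    simp only [Pi.add_apply, ofReal_sub, ofReal_one, re_eq_add_conj, map_mul]
    ring
  have hgc : Integrable (fun x => conj (g x)) haarAddCircle :=
    conjCLE.toContinuousLinearMap.integrable_comp hg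
  rw [hsplit, fourierCoeff.add (integrable_const _) ((hg.const_mul _).add (hgc.const_mul _)),
    fourierCoeff.add (hg.const_mul _) (hgc.const_mul _)]
  simp only [Pi.add_apply, fourierCoeff.const_mul, fourierCoeff_one, fourierCoeff_conj]
  ring

theorem norm_fourierCoeff_le_two_mul_one_sub_norm_fourierCoeff_zero {g : AddCircle T → ℂ}
    (hg : Integrable g haarAddCircle) (hg1 : ∀ x, ‖g x‖ ≤ 1) {k : ℤ} (hk : k ≠ 0)
    (hneg : fourierCoeff g (-k) = 0) :
    ‖fourierCoeff g k‖ ≤ 2 * (1 - ‖fourierCoeff g 0‖) := by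
  set c := fourierCoeff g 0
  set l : ℂ := exp (-arg c * I)
  have hl : ‖l‖ = 1 := by simpa [l] using norm_exp_ofReal_mul_I (-arg c)
  have hlc : l * c = ‖c‖ := by
    calc l * c = ‖c‖ * exp (-arg c * I + arg c * I) := by
          rw [exp_add]; nth_rw 1 [← norm_mul_exp_arg_mul_I c]; ring
      _ = ‖c‖ := by simp
  set u : AddCircle T → ℝ := fun x => 1 - (l * g x).re
  have hu0 : 0 ≤ u := fun x => by
    have h1 := re_le_norm (l * g x)
    rw [norm_mul, hl, one_mul] at h1
    simp only [Pi.zero_apply, u]; linarith [hg1 x]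
  have hmean : ∫ x, u x ∂haarAddCircle = 1 - ‖c‖ := by
    have h0 := fourierCoeff_ofReal_one_sub_re_mul hg l 0
    rw [fourierCoeff_ofReal_zero, neg_zero] at h0
    refine ofReal_inj.mp (h0.trans ?_)
    have hlc' : conj l * conj c = ‖c‖ := by rw [← map_mul, hlc, conj_ofReal]
    rw [Pi.single_eq_same, ofReal_sub, ofReal_one]
    linear_combination (-1 / 2 : ℂ) * hlc - 1 / 2 * hlc'
  have hk_le := norm_fourierCoeff_ofReal_le_integral hu0 k
  rw [fourierCoeff_ofReal_one_sub_re_mul hg, hneg, hmean] at hk_le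
  simp [hk, hl] at hk_le
  linarith

end AddCircle

section PowerSeries

variable {a : ℕ → ℂ} {F : ℂ → ℂ}

theorem summable_norm_mul_pow_of_hasSum
    (hF : ∀ w : ℂ, ‖w‖ < 1 → HasSum (fun n => a n * w ^ n) (F w))
    {s : ℝ} (hs0 : 0 ≤ s) (hs1 : s < 1) : Summable fun n => ‖a n‖ * s ^ n := by
  obtain ⟨s', hss', hs'1⟩ := exists_between hs1
  have hs' : ‖(s' : ℂ)‖ = s' := by rw [norm_real, Real.norm_of_nonneg (hs0.trans hss'.le)]
  have hsum := summable_powerSeries_of_norm_lt (hF s' (hs'.trans_lt hs'1)).tendsto_sum_nat.cauchySeq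
    (z := (s : ℂ)) (by rwa [hs', norm_real, Real.norm_of_nonneg hs0])
  simpa [Real.norm_of_nonneg hs0] using summable_norm_iff.mpr hsum

theorem norm_coeff_mul_pow_le_two_mul_one_sub_norm_coeff_zero
    (hF : ∀ w : ℂ, ‖w‖ < 1 → HasSum (fun n => a n * w ^ n) (F w))
    (hF1 : ∀ w : ℂ, ‖w‖ < 1 → ‖F w‖ ≤ 1) {s : ℝ} (hs0 : 0 ≤ s) (hs1 : s < 1)
    {k : ℕ} (hk : k ≠ 0) :
    ‖a k‖ * s ^ k ≤ 2 * (1 - ‖a 0‖) := by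
  have : Fact ((0 : ℝ) < 1) := ⟨one_pos⟩
  have hb : Summable fun n => ‖a n * s ^ n‖ := by
    simpa [Real.norm_of_nonneg hs0] using summable_norm_mul_pow_of_hasSum hF hs0 hs1
  set g : UnitAddCircle → ℂ := fun x => ∑' n : ℕ, a n * s ^ n * fourier n x
  have hnorm : ∀ x : UnitAddCircle, ‖(s : ℂ) * fourier 1 x‖ < 1 := fun x => by
    simpa [fourier_apply, Circle.norm_coe, Real.norm_of_nonneg hs0] using hs1
  have hg : ∀ x, g x = F (s * fourier 1 x) := fun x => HasSum.tsum_eq <| by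
    simpa only [mul_pow, ← fourier_natCast_apply, mul_assoc] using hF _ (hnorm x)
  have hgcont : Continuous g :=
    continuous_tsum (fun n => by fun_prop) hb fun n x => by simp [fourier_apply, Circle.norm_coe]
  have hcoeff := fourierCoeff_tsum_mul_fourier (T := 1) (fun n => a n * s ^ n) Nat.cast hb
  have hneg : fourierCoeff g (-k) = 0 := by
    rw [hcoeff]
    simp [hk]
  have hpos : ∀ m : ℕ, fourierCoeff g m = a m * s ^ m := fun m => by
    rw [hcoeff, tsum_eq_single m fun n hn => by simp [hn]]
    simp
  have h0 : fourierCoeff g 0 = a 0 := by simpa using hpos 0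
  have hwiener := norm_fourierCoeff_le_two_mul_one_sub_norm_fourierCoeff_zero
    (hgcont.integrable_of_hasCompactSupport (HasCompactSupport.of_compactSpace g))
    (fun x => hg x ▸ hF1 _ (hnorm x)) (Int.natCast_ne_zero.mpr hk) hneg
  simpa [hpos, h0, Real.norm_of_nonneg hs0] using hwiener

theorem norm_coeff_le_two_mul_one_sub_norm_coeff_zero
    (hF : ∀ w : ℂ, ‖w‖ < 1 → HasSum (fun n => a n * w ^ n) (F w))
    (hF1 : ∀ w : ℂ, ‖w‖ < 1 → ‖F w‖ ≤ 1) {k : ℕ} (hk : k ≠ 0) :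
    ‖a k‖ ≤ 2 * (1 - ‖a 0‖) := by
  have hlim : Tendsto (fun s : ℝ => ‖a k‖ * s ^ k) (𝓝[<] 1) (𝓝 ‖a k‖) := by
    have hcont : Continuous fun s : ℝ => ‖a k‖ * s ^ k := by fun_prop
    simpa using (hcont.tendsto 1).mono_left nhdsWithin_le_nhds
  refine le_of_tendsto hlim ?_
  filter_upwards [Ioo_mem_nhdsLT zero_lt_one] with s hs
  exact norm_coeff_mul_pow_le_two_mul_one_sub_norm_coeff_zero hF hF1 hs.1.le hs.2 hk

theorem tsum_norm_mul_pow_le_one (hF : ∀ w : ℂ, ‖w‖ < 1 → HasSum (fun n => a n * w ^ n) (F w))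
    (hF1 : ∀ w : ℂ, ‖w‖ < 1 → ‖F w‖ ≤ 1) {t : ℝ} (ht0 : 0 ≤ t) (ht : t ≤ 1 / 3) :
    ∑' n, ‖a n‖ * t ^ n ≤ 1 := by
  have ht1 : t < 1 := by linarith
  set c := 1 - ‖a 0‖
  have hc : 0 ≤ c := by
    linarith [norm_nonneg (a 1), norm_coeff_le_two_mul_one_sub_norm_coeff_zero hF hF1 one_ne_zero]
  have hsum := summable_norm_mul_pow_of_hasSum hF ht0 ht1
  have hgeom : HasSum (fun n : ℕ => 2 * c * t ^ (n + 1)) (2 * c * (t / (1 - t))) := by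
    simpa only [pow_succ', ← mul_assoc, div_eq_mul_inv] using
      (hasSum_geometric_of_lt_one ht0 ht1).mul_left (2 * c * t)
  have htail : ∑' n, ‖a (n + 1)‖ * t ^ (n + 1) ≤ 2 * c * (t / (1 - t)) :=
    hasSum_le (fun n => mul_le_mul_of_nonneg_right
      (norm_coeff_le_two_mul_one_sub_norm_coeff_zero hF hF1 n.succ_ne_zero) (pow_nonneg ht0 _))
      ((summable_nat_add_iff 1).mpr hsum).hasSum hgeom
  have hratio : 2 * (t / (1 - t)) ≤ 1 := by
    rw [mul_div_assoc', div_le_one (by linarith)]; linarith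
  rw [hsum.tsum_eq_zero_add, pow_zero, mul_one]
  linarith [mul_le_mul_of_nonneg_left hratio hc]

end PowerSeries

theorem Complex.exists_norm_lt_one_pow_eq {p : ℕ} (hp : p ≠ 0) {w : ℂ} (hw : ‖w‖ < 1) :
    ∃ z : ℂ, ‖z‖ < 1 ∧ z ^ p = w := by
  obtain ⟨z, hz⟩ := IsAlgClosed.exists_pow_nat_eq w (Nat.pos_of_ne_zero hp)
  refine ⟨z, ?_, hz⟩
  rwa [← pow_lt_one_iff_of_nonneg (norm_nonneg z) hp, ← norm_pow, hz]

theorem Real.pow_le_inv_of_le_rpow_neg_one_div {p : ℕ} (hp : p ≠ 0) {x r : ℝ} (hx : 0 ≤ x)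
    (hr0 : 0 ≤ r) (hr : r ≤ x ^ (-(1 / (p : ℝ)))) : r ^ p ≤ x⁻¹ := by
  calc r ^ p ≤ (x ^ (-(1 / (p : ℝ)))) ^ p := by gcongr
    _ = x⁻¹ := by
      rw [← Real.rpow_natCast, ← Real.rpow_mul hx, neg_mul, one_div_mul_cancel (by positivity),
        Real.rpow_neg_one]

/-- Bohr's inequality for bounded analytic functions of the form `∑ aₖ z^(pk)`:
the majorant series is at most `1` for `r ≤ 3^(−1/p)`. -/
theorem bohr_inequality_p_symmetric
    (p : ℕ) (hp : 0 < p)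
    (a : ℕ → ℂ) (f : ℂ → ℂ)
    (hf : ∀ z : ℂ, ‖z‖ < 1 → HasSum (fun k : ℕ => a k * z ^ (p * k)) (f z))
    (hbound : ∀ z : ℂ, ‖z‖ < 1 → ‖f z‖ ≤ 1) :
    ∀ r : ℝ, 0 ≤ r → r ≤ (3 : ℝ) ^ (-(1 / (p : ℝ))) →
      (∑' k : ℕ, ‖a k‖ * r ^ (p * k)) ≤ 1 := by
  intro r hr0 hr
  choose! root hroot_lt hroot_pow using
    fun w (hw : ‖w‖ < 1) => Complex.exists_norm_lt_one_pow_eq hp.ne' hw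
  have hF : ∀ w : ℂ, ‖w‖ < 1 → HasSum (fun k => a k * w ^ k) (f (root w)) := fun w hw => by
    simpa only [pow_mul, hroot_pow w hw] using hf _ (hroot_lt w hw)
  have hrp : r ^ p ≤ 1 / 3 := by
    simpa using Real.pow_le_inv_of_le_rpow_neg_one_div hp.ne' zero_le_three hr0 hr
  simp_rw [pow_mul]
  exact tsum_norm_mul_pow_le_one hF (fun w hw => hbound _ (hroot_lt w hw)) (by positivity) hrp
end

section
/- Let p be a positive integer. If f(z) = ∑_{k=1}^∞ a_k z^{pk} converges for all z in the unit disk 𝔻 (so the constant coefficient vanishes, f(0) = 0) and |f(z)| ≤ 1 for all z ∈ 𝔻, then ∑_{k=1}^∞ |a_k| r^{pk} ≤ 1 for all r with 0 ≤ r ≤ 2^{−1/(2p)}. -/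
/-!
Cauchy–Schwarz gives `∑ |aₖ| r^(pk) ≤ (∑ |aₖ|²)^(1/2) (∑ r^(2pk))^(1/2)`, and the second factor
is at most `1` as soon as `r^(2p) ≤ 1/2`. So everything rests on `∑ |aₖ|² ≤ 1`, a discrete
Parseval inequality: for `0 < ρ < 1` put `cₖ = aₖ ρ^(pk)`; the mean of `|f(ρζ)|²` over the `N`-th
roots of unity `ζ` is the sum of `cₖ c̄ₗ` over the pairs with `pk ≡ pl (mod N)`. It is at most `1`,
and tends to `∑ |cₖ|²` as `N → ∞` by dominated convergence; finally let `ρ → 1`.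
-/

open Complex ComplexConjugate Filter Topology Finset Function

section LacunarySeries

variable {ι : Type*} {c : ι → ℂ} {e : ι → ℕ}

theorem summable_norm_mul_pow_of_summable {z : ℂ} (hz : Summable fun i => c i * z ^ e i)
    (he : Injective e) {r : ℝ} (hr0 : 0 ≤ r) (hr : r < ‖z‖) :
    Summable fun i => ‖c i‖ * r ^ e i := by
  have hz0 : 0 < ‖z‖ := hr0.trans_lt hr
  have hq : Summable fun i => (r / ‖z‖) ^ e i :=
    (summable_geometric_of_lt_one (by positivity) ((div_lt_one hz0).2 hr)).comp_injective he
  refine hq.of_norm_bounded_eventually ?_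
  have hbdd := (tendsto_norm_zero.comp hz.tendsto_cofinite_zero).eventually (ge_mem_nhds one_pos)
  filter_upwards [hbdd] with i hi
  calc ‖‖c i‖ * r ^ e i‖ = ‖c i * z ^ e i‖ * (r / ‖z‖) ^ e i := by
        simp only [norm_mul, norm_pow, norm_norm, Real.norm_of_nonneg hr0, div_pow]
        field_simp
    _ ≤ (r / ‖z‖) ^ e i := mul_le_of_le_one_left (by positivity) hi

noncomputable def congrPairSum (c : ι → ℂ) (e : ι → ℕ) (N : ℕ) : ℂ :=
  ∑' q : ι × ι, if (e q.1 : ZMod N) = e q.2 then c q.1 * conj (c q.2) else 0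

theorem sum_norm_sq_tsum_stdAddChar_pow (N : ℕ) [NeZero N] (hc : Summable fun i => ‖c i‖) :
    ∑ j : ZMod N, ((‖∑' i, c i * ZMod.stdAddChar j ^ e i‖ ^ 2 : ℝ) : ℂ) =
      N * congrPairSum c e N := by
  set ψ : AddChar (ZMod N) ℂ := ZMod.stdAddChar
  set t : ZMod N → ι × ι → ℂ := fun j q =>
    c q.1 * conj (c q.2) * ψ (j * ((e q.1 : ZMod N) - e q.2))
  have ht (j : ZMod N) : Summable (t j) :=
    (hc.mul_of_nonneg hc (fun _ => norm_nonneg _) fun _ => norm_nonneg _).of_norm_bounded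
      fun q => by simp [t, AddChar.norm_apply]
  have hnorm_sq (j : ZMod N) : ((‖∑' i, c i * ψ j ^ e i‖ ^ 2 : ℝ) : ℂ) = ∑' q, t j q := by
    have hc' : Summable fun i => ‖c i * ψ j ^ e i‖ := by simpa [AddChar.norm_apply] using hc
    rw [ofReal_pow, ← mul_conj', conj_tsum,
      tsum_mul_tsum_of_summable_norm hc' (by simpa using hc')]
    refine tsum_congr fun q => ?_
    have : j * ((e q.1 : ZMod N) - e q.2) = e q.1 • j + -(e q.2 • j) := by
      simp only [nsmul_eq_mul]; ring
    simp only [t, this, AddChar.map_add_eq_mul, AddChar.map_neg_eq_conj, AddChar.map_nsmul_eq_pow,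
      map_mul, map_pow]
    ring
  calc ∑ j : ZMod N, ((‖∑' i, c i * ψ j ^ e i‖ ^ 2 : ℝ) : ℂ)
      = ∑ j, ∑' q, t j q := sum_congr rfl fun j _ => hnorm_sq j
    _ = ∑' q, ∑ j, t j q := (Summable.tsum_finsetSum fun j _ => ht j).symm
    _ = N * congrPairSum c e N := by
      rw [congrPairSum, ← tsum_mul_left]
      refine tsum_congr fun q => ?_
      rw [← mul_sum, AddChar.sum_mulShift _ (ZMod.isPrimitive_stdAddChar N)]
      simp only [sub_eq_zero, ZMod.card]
      split_ifs <;> push_cast <;> ring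

theorem norm_congrPairSum_le_one (N : ℕ) [NeZero N] (hc : Summable fun i => ‖c i‖)
    (hbound : ∀ z : ℂ, ‖z‖ = 1 → ‖∑' i, c i * z ^ e i‖ ≤ 1) :
    ‖congrPairSum c e N‖ ≤ 1 := by
  have hN : (0 : ℝ) < N := Nat.cast_pos.2 (NeZero.pos N)
  have h : ‖(N : ℂ) * congrPairSum c e N‖ ≤ N := by
    rw [← sum_norm_sq_tsum_stdAddChar_pow N hc, ← ofReal_sum, norm_real,
      Real.norm_of_nonneg (by positivity)]
    calc ∑ j : ZMod N, ‖∑' i, c i * ZMod.stdAddChar j ^ e i‖ ^ 2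
        ≤ ∑ _j : ZMod N, (1 : ℝ) :=
          sum_le_sum fun j _ => pow_le_one₀ (norm_nonneg _) (hbound _ (AddChar.norm_apply _ _))
      _ = N := by simp
  rw [norm_mul, norm_natCast] at h
  exact le_of_mul_le_mul_left (by simpa using h) hN

theorem tendsto_congrPairSum (he : Injective e) (hc : Summable fun i => ‖c i‖) :
    Tendsto (congrPairSum c e) atTop (𝓝 (∑' i, ((‖c i‖ ^ 2 : ℝ) : ℂ))) := by
  classical
  have hdiag : ∑' i, ((‖c i‖ ^ 2 : ℝ) : ℂ) =
      ∑' q : ι × ι, if q.1 = q.2 then c q.1 * conj (c q.2) else 0 := by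
    have hinj : Injective fun i : ι => (i, i) := fun i j h => congrArg Prod.fst h
    rw [← hinj.tsum_eq]
    · simp [mul_conj']
    · intro q hq
      by_cases h : q.1 = q.2
      · exact ⟨q.1, Prod.ext rfl h⟩
      · simp [h] at hq
  rw [hdiag]
  refine tendsto_tsum_of_dominated_convergence
    (hc.mul_of_nonneg hc (fun _ => norm_nonneg _) fun _ => norm_nonneg _) (fun q => ?_)
    (Eventually.of_forall fun N q => ?_)
  · refine tendsto_const_nhds.congr' ?_
    filter_upwards [eventually_gt_atTop (e q.1), eventually_gt_atTop (e q.2)] with N h1 h2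
    refine if_congr ?_ rfl rfl
    rw [ZMod.natCast_eq_natCast_iff', Nat.mod_eq_of_lt h1, Nat.mod_eq_of_lt h2, he.eq_iff]
  · split_ifs <;> simp [mul_nonneg]

theorem tsum_norm_sq_le_one_of_norm_tsum_le_one (he : Injective e)
    (hc : Summable fun i => ‖c i‖)
    (hbound : ∀ z : ℂ, ‖z‖ = 1 → ‖∑' i, c i * z ^ e i‖ ≤ 1) : ∑' i, ‖c i‖ ^ 2 ≤ 1 := by
  have h := le_of_tendsto (tendsto_congrPairSum he hc).norm <| by
    filter_upwards [eventually_ne_atTop 0] with N hN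
    have : NeZero N := ⟨hN⟩
    exact norm_congrPairSum_le_one N hc hbound
  rwa [← ofReal_tsum, norm_real, Real.norm_of_nonneg (tsum_nonneg fun i => by positivity)] at h

theorem sum_sq_norm_mul_pow_le_one {f : ℂ → ℂ} (he : Injective e)
    (hf : ∀ z : ℂ, ‖z‖ < 1 → HasSum (fun i => c i * z ^ e i) (f z))
    (hbound : ∀ z : ℂ, ‖z‖ < 1 → ‖f z‖ ≤ 1) {ρ : ℝ} (hρ0 : 0 ≤ ρ) (hρ1 : ρ < 1)
    (s : Finset ι) : ∑ i ∈ s, (‖c i‖ * ρ ^ e i) ^ 2 ≤ 1 := by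
  set cρ : ι → ℂ := fun i => c i * (ρ : ℂ) ^ e i
  have hnorm (i : ι) : ‖cρ i‖ = ‖c i‖ * ρ ^ e i := by
    simp [cρ, norm_real, Real.norm_of_nonneg hρ0]
  have hsum : Summable fun i => ‖cρ i‖ := by
    simp only [hnorm]
    refine summable_norm_mul_pow_of_summable (z := ((1 + ρ) / 2 : ℝ))
      (hf _ ?_).summable he hρ0 ?_ <;>
    rw [norm_real, Real.norm_of_nonneg (by positivity)] <;> linarith
  have hsum_sq : Summable fun i => ‖cρ i‖ ^ 2 := by
    have hdiag : Injective fun i : ι => (i, i) := fun i j h => congrArg Prod.fst h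
    simpa [sq, Function.comp_def] using
      (hsum.mul_of_nonneg hsum (fun _ => norm_nonneg _) fun _ => norm_nonneg _).comp_injective
        hdiag
  have hcircle (z : ℂ) (hz : ‖z‖ = 1) : ‖∑' i, cρ i * z ^ e i‖ ≤ 1 := by
    have hρz : ‖(ρ : ℂ) * z‖ < 1 := by simpa [hz, Real.norm_of_nonneg hρ0] using hρ1
    simpa only [cρ, mul_assoc, ← mul_pow, (hf _ hρz).tsum_eq] using hbound _ hρz
  calc ∑ i ∈ s, (‖c i‖ * ρ ^ e i) ^ 2 = ∑ i ∈ s, ‖cρ i‖ ^ 2 := by simp only [hnorm]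
    _ ≤ ∑' i, ‖cρ i‖ ^ 2 := hsum_sq.sum_le_tsum s fun _ _ => by positivity
    _ ≤ 1 := tsum_norm_sq_le_one_of_norm_tsum_le_one he hsum hcircle

theorem sum_norm_sq_le_one_of_hasSum {f : ℂ → ℂ} (he : Injective e)
    (hf : ∀ z : ℂ, ‖z‖ < 1 → HasSum (fun i => c i * z ^ e i) (f z))
    (hbound : ∀ z : ℂ, ‖z‖ < 1 → ‖f z‖ ≤ 1) (s : Finset ι) : ∑ i ∈ s, ‖c i‖ ^ 2 ≤ 1 := by
  have hcont : Continuous fun ρ : ℝ => ∑ i ∈ s, (‖c i‖ * ρ ^ e i) ^ 2 := by fun_prop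
  have hlim : Tendsto (fun ρ : ℝ => ∑ i ∈ s, (‖c i‖ * ρ ^ e i) ^ 2) (𝓝[<] 1)
      (𝓝 (∑ i ∈ s, ‖c i‖ ^ 2)) := by
    simpa using (hcont.tendsto 1).mono_left nhdsWithin_le_nhds
  refine le_of_tendsto hlim ?_
  filter_upwards [Ioo_mem_nhdsLT zero_lt_one] with ρ hρ
  exact sum_sq_norm_mul_pow_le_one he hf hbound hρ.1.le hρ.2 s

end LacunarySeries

theorem pow_two_mul_le_half {p : ℕ} (hp : 0 < p) {r : ℝ} (hr0 : 0 ≤ r)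
    (hr : r ≤ (2 : ℝ) ^ (-(1 / (2 * (p : ℝ))))) : r ^ (2 * p) ≤ 1 / 2 := by
  calc r ^ (2 * p) ≤ ((2 : ℝ) ^ (-(1 / (2 * (p : ℝ))))) ^ (2 * p) := pow_le_pow_left₀ hr0 hr _
    _ = 1 / 2 := by
      have hp' : (p : ℝ) ≠ 0 := by positivity
      rw [← Real.rpow_natCast, ← Real.rpow_mul zero_le_two,
        show -(1 / (2 * (p : ℝ))) * ((2 * p : ℕ) : ℝ) = -1 by push_cast; field_simp]
      norm_num [Real.rpow_neg_one]

theorem sum_pow_succ_le_one {y : ℝ} (hy0 : 0 ≤ y) (hy : y ≤ 1 / 2) (s : Finset ℕ) :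
    ∑ k ∈ s, y ^ (k + 1) ≤ 1 :=
  calc ∑ k ∈ s, y ^ (k + 1) ≤ ∑ k ∈ s, (1 / 2 : ℝ) ^ (k + 1) :=
        sum_le_sum fun k _ => pow_le_pow_left₀ hy0 hy _
    _ = 1 / 2 * ∑ k ∈ s, (1 / 2 : ℝ) ^ k := by simp only [mul_sum, pow_succ']
    _ ≤ 1 / 2 * 2 := by
      gcongr
      exact (summable_geometric_two.sum_le_tsum s fun _ _ => by positivity).trans_eq
        tsum_geometric_two
    _ = 1 := by norm_num

/-- Bohr's inequality for bounded analytic functions of the form `∑_{k≥1} aₖ z^(pk)`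
(vanishing constant coefficient): the majorant series is at most `1` for
`r ≤ 2^(−1/(2p))`. -/
theorem bohr_inequality_p_symmetric_no_constant
    (p : ℕ) (hp : 0 < p)
    (a : ℕ → ℂ) (f : ℂ → ℂ)
    (hf : ∀ z : ℂ, ‖z‖ < 1 → HasSum (fun k : ℕ => a (k + 1) * z ^ (p * (k + 1))) (f z))
    (hbound : ∀ z : ℂ, ‖z‖ < 1 → ‖f z‖ ≤ 1) :
    ∀ r : ℝ, 0 ≤ r → r ≤ (2 : ℝ) ^ (-(1 / (2 * (p : ℝ)))) →
      (∑' k : ℕ, ‖a (k + 1)‖ * r ^ (p * (k + 1))) ≤ 1 := by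
  intro r hr0 hr
  refine tsum_le_of_sum_le' zero_le_one fun s => ?_
  have he : Injective fun k : ℕ => p * (k + 1) := fun k l h => by simpa [hp.ne'] using h
  have hcoeff : ∑ k ∈ s, ‖a (k + 1)‖ ^ 2 ≤ 1 :=
    sum_norm_sq_le_one_of_hasSum (c := fun k => a (k + 1)) he hf hbound s
  have hpow : ∑ k ∈ s, (r ^ (p * (k + 1))) ^ 2 ≤ 1 := by
    simpa only [← pow_mul, show ∀ k, 2 * p * (k + 1) = p * (k + 1) * 2 from fun k => by ring]
      using sum_pow_succ_le_one (by positivity) (pow_two_mul_le_half hp hr0 hr) s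
  calc ∑ k ∈ s, ‖a (k + 1)‖ * r ^ (p * (k + 1))
      ≤ √(∑ k ∈ s, ‖a (k + 1)‖ ^ 2) * √(∑ k ∈ s, (r ^ (p * (k + 1))) ^ 2) :=
        Real.sum_mul_le_sqrt_mul_sqrt _ _ _
    _ ≤ 1 := mul_le_one₀ (Real.sqrt_le_one.2 hcoeff) (Real.sqrt_nonneg _) (Real.sqrt_le_one.2 hpow)
end

section
/- Let p be a positive integer and m an integer with 0 ≤ m ≤ p, and let r_{p,m} ∈ (0,1] be the largest positive real root of the equation 1 − 6 t^{p−m} + t^{2(p−m)} + 8 t^{2p} = 0. Then 2 r_{p,m}^{p+m} ≤ 1. -/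
/-- Lemma 1 of Kayumov–Ponnusamy: for the largest positive root `r` of
`1 − 6 t^(p−m) + t^(2(p−m)) + 8 t^(2p) = 0` one has `2 r^(p+m) ≤ 1`. -/
theorem two_rpm_pow_le_one
    (p m : ℕ) (hp : 0 < p) (hm : m ≤ p)
    (r : ℝ) (hr0 : 0 < r) (hr1 : r ≤ 1)
    (hroot : 1 - 6 * r ^ (p - m) + r ^ (2 * (p - m)) + 8 * r ^ (2 * p) = 0)
    (hmax : ∀ t : ℝ, 0 < t →
      1 - 6 * t ^ (p - m) + t ^ (2 * (p - m)) + 8 * t ^ (2 * p) = 0 → t ≤ r) :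
    2 * r ^ (p + m) ≤ 1 := by
  have hx : 0 < r ^ (p - m) := pow_pos hr0 _
  have h1 : r ^ (2 * p) = r ^ (p + m) * r ^ (p - m) := by
    rw [← pow_add]; congr 1; omega
  have h2 : r ^ (2 * (p - m)) = r ^ (p - m) * r ^ (p - m) := by
    rw [← pow_add]; congr 1; omega
  nlinarith [sq_nonneg (r ^ (p - m) - 1), hx]
end

section
/- Let h and g be analytic functions on the unit disk 𝔻 with h(0) = 0 and g(0) = 0, and suppose the harmonic mapping f(z) = h(z) + conj(g(z)) satisfies |f(z)| < 1 for all z ∈ 𝔻. Then for every z ∈ 𝔻, |h(z)| + |g(z)| ≤ (2/π) · log((1 + |z|)/(1 − |z|)). -/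
/-!
For `‖l‖ = 1`, `F = l h + conj l g` is holomorphic with `F(0) = 0` and
`Re F = Re (l (h + conj g))`, so `F` maps the disk into the strip `|Re w| < 1`.
The map `w ↦ (e^{iπw/2} - 1) / (e^{iπw/2} + 1)` sends this strip into the disk, so by
Schwarz's lemma the composite `G` satisfies `|G(z)| ≤ |z|`. Inverting the strip map,
`(π/2) |F(z)| = |log (1 + G(z)) - log (1 - G(z))| ≤ log (1 + |z|) - log (1 - |z|)`,
because the power series of `log (1 + w) - log (1 - w)` has nonnegative coefficients.
Finally `l` is chosen so that `l h(z)` and `conj l g(z)` point in the same direction,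
which makes `|F(z)| = |h(z)| + |g(z)|`.
-/

open Metric
open scoped Real ComplexConjugate

namespace Complex

theorem log_div_of_re_pos {x y : ℂ} (hx : 0 < x.re) (hy : 0 < y.re) :
    log (x / y) = log x - log y := by
  have harg (u : ℂ) (hu : 0 < u.re) : |u.arg| < π / 2 := abs_arg_lt_pi_div_two_iff.mpr (.inl hu)
  have hx₀ : x ≠ 0 := fun h ↦ by simp [h] at hx
  have hy₀ : y ≠ 0 := fun h ↦ by simp [h] at hy
  have him : (log x - log y).im = x.arg - y.arg := by simp [log_im]
  obtain ⟨hx₁, hx₂⟩ := abs_lt.mp (harg x hx)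
  obtain ⟨hy₁, hy₂⟩ := abs_lt.mp (harg y hy)
  refine exp_inj_of_neg_pi_lt_of_le_pi (neg_pi_lt_log_im _) (log_im_le_pi _)
    (by rw [him]; linarith) (by rw [him]; linarith) ?_
  rw [exp_sub, exp_log hx₀, exp_log hy₀, exp_log (div_ne_zero hx₀ hy₀)]

theorem re_one_add_pos {w : ℂ} (hw : ‖w‖ < 1) : 0 < (1 + w).re := by
  simp only [add_re, one_re]
  linarith [neg_abs_le w.re, abs_re_le_norm w]

theorem re_one_sub_pos {w : ℂ} (hw : ‖w‖ < 1) : 0 < (1 - w).re := by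
  simp only [sub_re, one_re]
  linarith [le_abs_self w.re, abs_re_le_norm w]

theorem hasSum_log_one_add_sub_log_one_sub {w : ℂ} (hw : ‖w‖ < 1) :
    HasSum (fun n : ℕ ↦ (((-1 : ℝ) ^ (n + 1) + 1) / n : ℝ) * w ^ n)
      (log (1 + w) - log (1 - w)) := by
  convert (hasSum_taylorSeries_log hw).add (hasSum_taylorSeries_neg_log hw) using 1
  · ext n; push_cast; ring
  · ring

theorem norm_log_one_add_sub_log_one_sub_le {w : ℂ} (hw : ‖w‖ < 1) :
    ‖log (1 + w) - log (1 - w)‖ ≤ Real.log (1 + ‖w‖) - Real.log (1 - ‖w‖) := by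
  have hreal : HasSum (fun n : ℕ ↦ ((-1 : ℝ) ^ (n + 1) + 1) / n * ‖w‖ ^ n)
      (Real.log (1 + ‖w‖) - Real.log (1 - ‖w‖)) := by
    rw [← hasSum_ofReal]
    convert hasSum_log_one_add_sub_log_one_sub (w := ‖w‖) (by simpa using hw) using 1
    · ext n; push_cast; ring
    · rw [ofReal_sub, ofReal_log (by positivity), ofReal_log (by linarith)]
      push_cast; ring
  refine (hasSum_log_one_add_sub_log_one_sub hw).norm_le_of_bounded hreal fun n ↦ ?_
  have hc : 0 ≤ (-1 : ℝ) ^ (n + 1) + 1 := by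
    rcases neg_one_pow_eq_or ℝ (n + 1) with h | h <;> simp [h]
  rw [norm_mul, norm_real, norm_pow, Real.norm_of_nonneg (by positivity)]

theorem add_one_ne_zero_of_re_pos {E : ℂ} (hE : 0 < E.re) : E + 1 ≠ 0 :=
  fun h ↦ by simpa [h] using (by simp; linarith : 0 < (E + 1).re)

theorem norm_sub_one_div_add_one_lt_one {E : ℂ} (hE : 0 < E.re) :
    ‖(E - 1) / (E + 1)‖ < 1 := by
  rw [norm_div, div_lt_one (norm_pos_iff.mpr (add_one_ne_zero_of_re_pos hE))]
  refine lt_of_pow_lt_pow_left₀ 2 (norm_nonneg _) ?_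
  simp only [Complex.sq_norm, normSq_apply, sub_re, sub_im, add_re, add_im, one_re, one_im]
  nlinarith

theorem log_eq_log_one_add_sub_log_one_sub {E : ℂ} (hE : 0 < E.re) :
    log E = log (1 + (E - 1) / (E + 1)) - log (1 - (E - 1) / (E + 1)) := by
  have hc := norm_sub_one_div_add_one_lt_one hE
  rw [← log_div_of_re_pos (re_one_add_pos hc) (re_one_sub_pos hc)]
  congr 1
  field_simp [add_one_ne_zero_of_re_pos hE]
  ring

theorem im_pi_div_two_mul_I_mul (w : ℂ) : (π / 2 * I * w).im = π / 2 * w.re := by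
  simp [mul_im, mul_re]

theorem re_exp_pi_div_two_mul_I_mul_pos {w : ℂ} (hw : |w.re| < 1) :
    0 < (exp (π / 2 * I * w)).re := by
  rw [exp_re, im_pi_div_two_mul_I_mul]
  have := abs_lt.mp hw
  exact mul_pos (Real.exp_pos _)
    (Real.cos_pos_of_mem_Ioo ⟨by nlinarith [Real.pi_pos], by nlinarith [Real.pi_pos]⟩)

theorem log_exp_pi_div_two_mul_I_mul {w : ℂ} (hw : |w.re| < 1) :
    log (exp (π / 2 * I * w)) = π / 2 * I * w := by
  have := abs_lt.mp hw
  apply log_exp <;> rw [im_pi_div_two_mul_I_mul] <;> nlinarith [Real.pi_pos]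

theorem norm_le_log_of_abs_re_lt_one {F : ℂ → ℂ} (hF : DifferentiableOn ℂ F (ball 0 1))
    (hF₀ : F 0 = 0) (hre : ∀ w ∈ ball (0 : ℂ) 1, |(F w).re| < 1) {z : ℂ} (hz : ‖z‖ < 1) :
    ‖F z‖ ≤ 2 / π * Real.log ((1 + ‖z‖) / (1 - ‖z‖)) := by
  set E : ℂ → ℂ := fun w ↦ exp (π / 2 * I * F w)
  set G : ℂ → ℂ := fun w ↦ (E w - 1) / (E w + 1)
  have hE (w) (hw : w ∈ ball (0 : ℂ) 1) : 0 < (E w).re :=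
    re_exp_pi_div_two_mul_I_mul_pos (hre w hw)
  have hG : DifferentiableOn ℂ G (ball 0 1) :=
    (((hF.const_mul _).cexp).sub_const 1).div (((hF.const_mul _).cexp).add_const 1)
      fun w hw ↦ add_one_ne_zero_of_re_pos (hE w hw)
  have hG_maps : Set.MapsTo G (ball 0 1) (closedBall 0 1) := fun w hw ↦
    mem_closedBall_zero_iff.mpr (norm_sub_one_div_add_one_lt_one (hE w hw)).le
  have hGz : ‖G z‖ ≤ ‖z‖ := norm_le_norm_of_mapsTo_ball hG hG_maps (by simp [G, E, hF₀]) hz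
  have hz_mem : z ∈ ball (0 : ℂ) 1 := mem_ball_zero_iff.mpr hz
  have hFz : π / 2 * ‖F z‖ = ‖log (1 + G z) - log (1 - G z)‖ := by
    rw [← log_eq_log_one_add_sub_log_one_sub (hE z hz_mem),
      log_exp_pi_div_two_mul_I_mul (hre z hz_mem)]
    simp [abs_of_pos Real.pi_pos]
  have hGz₁ : ‖G z‖ < 1 := hGz.trans_lt hz
  have hlog : π / 2 * ‖F z‖ ≤ Real.log ((1 + ‖z‖) / (1 - ‖z‖)) := by
    rw [hFz, Real.log_div (by positivity) (by linarith)]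
    refine (norm_log_one_add_sub_log_one_sub_le hGz₁).trans ?_
    gcongr
  rw [div_mul_eq_mul_div, le_div_iff₀ Real.pi_pos]
  linarith

theorem re_mul_add_conj_mul (l a b : ℂ) : (l * a + conj l * b).re = (l * (a + conj b)).re := by
  rw [mul_add, add_re, add_re, ← conj_re (conj l * b), map_mul, conj_conj]

theorem exists_norm_eq_one_norm_mul_add_conj_mul (a b : ℂ) :
    ∃ l : ℂ, ‖l‖ = 1 ∧ ‖l * a + conj l * b‖ = ‖a‖ + ‖b‖ := by
  refine ⟨exp (((b.arg - a.arg) / 2 : ℝ) * I), norm_exp_ofReal_mul_I _, ?_⟩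
  have key : exp (((b.arg - a.arg) / 2 : ℝ) * I) * (‖a‖ * exp (a.arg * I)) +
      conj (exp (((b.arg - a.arg) / 2 : ℝ) * I)) * (‖b‖ * exp (b.arg * I)) =
      (‖a‖ + ‖b‖ : ℝ) * exp (((a.arg + b.arg) / 2 : ℝ) * I) := by
    rw [← exp_conj, map_mul, conj_ofReal, conj_I]
    simp only [mul_left_comm _ (‖_‖ : ℂ), ← exp_add]
    push_cast
    ring_nf
  rw [norm_mul_exp_arg_mul_I, norm_mul_exp_arg_mul_I] at key
  rw [key, norm_mul, norm_exp_ofReal_mul_I, mul_one, norm_real,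
    Real.norm_of_nonneg (by positivity)]

end Complex

open Complex

open Metric in
/-- If `f = h + conj g` is a harmonic mapping of the unit disk with `h(0) = g(0) = 0`
and `|f| < 1` on the disk, then `|h(z)| + |g(z)| ≤ (2/π) log((1+|z|)/(1−|z|))`. -/
theorem harmonic_schwarz_log_bound
    (h g : ℂ → ℂ)
    (hh : AnalyticOnNhd ℂ h (ball (0 : ℂ) 1))
    (hg : AnalyticOnNhd ℂ g (ball (0 : ℂ) 1))
    (hh0 : h 0 = 0) (hg0 : g 0 = 0)
    (hbound : ∀ z : ℂ, ‖z‖ < 1 → ‖h z + (starRingEnd ℂ) (g z)‖ < 1) :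
    ∀ z : ℂ, ‖z‖ < 1 →
      ‖h z‖ + ‖g z‖ ≤ (2 / Real.pi) * Real.log ((1 + ‖z‖) / (1 - ‖z‖)) := by
  intro z hz
  obtain ⟨l, hl, hlz⟩ := exists_norm_eq_one_norm_mul_add_conj_mul (h z) (g z)
  have hre (w) (hw : w ∈ ball (0 : ℂ) 1) : |(l * h w + conj l * g w).re| < 1 := by
    rw [re_mul_add_conj_mul]
    refine (abs_re_le_norm _).trans_lt ?_
    rw [norm_mul, hl, one_mul]
    exact hbound w (mem_ball_zero_iff.mp hw)
  rw [← hlz]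
  exact norm_le_log_of_abs_re_lt_one
    ((hh.differentiableOn.const_mul l).add (hg.differentiableOn.const_mul _))
    (by simp [hh0, hg0]) hre hz
end

section
/- Let h(z) = ∑_{k=0}^∞ a_k z^k and g(z) = ∑_{k=0}^∞ b_k z^k be analytic functions on the unit disk 𝔻 satisfying |h(z)| + |g(z)| ≤ 1 for all z ∈ 𝔻, and suppose g(0) = 0 (i.e., b_0 = 0). Then |a_0| + ∑_{k=1}^∞ (|a_k| + |b_k|) r^k ≤ 1 for all r with 0 ≤ r ≤ 1/3. -/
/-!
Wiener's inequality `‖c k‖ ≤ 1 - ‖c 0‖²` (`k ≥ 1`) for a map of the unit disk into the closed disk: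
for `k = 1` it is the Schwarz–Pick estimate at the centre (the Schwarz lemma applied after the
Blaschke factor moving `c 0` to `0`); for general `k` apply the case `k = 1` to the multisection
`w ↦ ∑ c (k m) wᵐ`, which is an average of rotations of the function and hence still bounded by `1`.
Rotating `b k` onto `a k` by a unimodular `u`, Wiener for `h + u g` (whose constant term is still
`a 0` because `b 0 = 0`) gives `‖a k‖ + ‖b k‖ ≤ 1 - ‖a 0‖²`. Summing, the left side is at most
`t + (1 - t²) r / (1 - r)` with `t = ‖a 0‖`, which is `≤ 1` as soon as `(1 + t) r ≤ 1 - r`,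
in particular for `r ≤ 1/3`.
-/

open Metric Set Finset FormalMultilinearSeries ComplexConjugate

lemma IsPrimitiveRoot.geom_sum_pow_eq_ite {R : Type*} [CommRing R] [IsDomain R] {ω : R} {k : ℕ}
    (hω : IsPrimitiveRoot ω k) (n : ℕ) :
    ∑ j ∈ range k, (ω ^ n) ^ j = if k ∣ n then (k : R) else 0 := by
  split_ifs with hkn
  · simp [(hω.pow_eq_one_iff_dvd n).mpr hkn]
  · have hne : ω ^ n - 1 ≠ 0 := sub_ne_zero.mpr fun h => hkn ((hω.pow_eq_one_iff_dvd n).mp h)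
    refine (mul_eq_zero.mp ?_).resolve_right hne
    rw [geom_sum_mul, ← pow_mul, mul_comm, pow_mul, hω.pow_eq_one, one_pow, sub_self]

section BlaschkeFactor

noncomputable def blaschkeFactor (α w : ℂ) : ℂ := (w - α) / (1 - conj α * w)

variable {α w : ℂ}

lemma one_sub_conj_mul_ne_zero (hα : ‖α‖ < 1) (hw : ‖w‖ ≤ 1) : 1 - conj α * w ≠ 0 := by
  refine sub_ne_zero.mpr fun h => ?_
  have : ‖conj α * w‖ < 1 := by
    rw [norm_mul, RCLike.norm_conj]
    nlinarith [norm_nonneg α, norm_nonneg w]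
  rw [← h, norm_one] at this
  exact this.false

lemma norm_blaschkeFactor_le_one (hα : ‖α‖ < 1) (hw : ‖w‖ ≤ 1) :
    ‖blaschkeFactor α w‖ ≤ 1 := by
  have hden := one_sub_conj_mul_ne_zero hα hw
  have hnormSq : Complex.normSq (w - α) + (1 - Complex.normSq α) * (1 - Complex.normSq w)
      = Complex.normSq (1 - conj α * w) := by
    simp only [Complex.normSq_apply, Complex.sub_re, Complex.sub_im, Complex.mul_re,
      Complex.mul_im, Complex.one_re, Complex.one_im, Complex.conj_re, Complex.conj_im]
    ring
  simp only [Complex.normSq_eq_norm_sq] at hnormSq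
  have hle : ‖w - α‖ ^ 2 ≤ ‖1 - conj α * w‖ ^ 2 := by
    have : 0 ≤ (1 - ‖α‖ ^ 2) * (1 - ‖w‖ ^ 2) :=
      mul_nonneg (by nlinarith [norm_nonneg α]) (by nlinarith [norm_nonneg w])
    linarith
  rw [blaschkeFactor, norm_div, div_le_one (norm_pos_iff.mpr hden)]
  exact (pow_le_pow_iff_left₀ (norm_nonneg _) (norm_nonneg _) two_ne_zero).mp hle

lemma differentiableAt_blaschkeFactor (hw : 1 - conj α * w ≠ 0) :
    DifferentiableAt ℂ (blaschkeFactor α) w :=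
  ((differentiableAt_id.sub_const α).div
    ((differentiableAt_id.const_mul _).const_sub 1) hw)

lemma hasDerivAt_blaschkeFactor_self (hα : ‖α‖ < 1) :
    HasDerivAt (blaschkeFactor α) ((1 - ‖α‖ ^ 2 : ℝ) : ℂ)⁻¹ α := by
  have hden : (1 : ℂ) - conj α * α = ((1 - ‖α‖ ^ 2 : ℝ) : ℂ) := by
    rw [Complex.conj_mul']; push_cast; ring
  have hne : ((1 - ‖α‖ ^ 2 : ℝ) : ℂ) ≠ 0 := by
    rw [Complex.ofReal_ne_zero]; nlinarith [norm_nonneg α]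
  have h := ((hasDerivAt_id' α).sub_const α).div
    (((hasDerivAt_id' α).const_mul (conj α)).const_sub 1) (hden ▸ hne)
  refine h.congr_deriv ?_
  simp only [sub_self, zero_mul, sub_zero, one_mul, hden]
  field_simp

end BlaschkeFactor

theorem norm_deriv_le_one_sub_norm_sq {f : ℂ → ℂ} {c : ℂ} (hd : DifferentiableOn ℂ f (ball c 1))
    (hf : MapsTo f (ball c 1) (closedBall 0 1)) : ‖deriv f c‖ ≤ 1 - ‖f c‖ ^ 2 := by
  have hball : ball c 1 ∈ nhds c := ball_mem_nhds c one_pos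
  have hfc : ‖f c‖ ≤ 1 := by simpa using hf (mem_ball_self one_pos)
  rcases hfc.eq_or_lt with hfc | hfc
  · have hmax : IsLocalMax (norm ∘ f) c :=
      Filter.mem_of_superset hball fun z hz => by simpa [hfc] using hf hz
    have hconst := Complex.eventually_eq_of_isLocalMax_norm
      (hd.eventually_differentiableAt hball) hmax
    rw [Filter.EventuallyEq.deriv_eq hconst, deriv_const, hfc]
    norm_num
  · set α := f c
    have hpos : 0 < 1 - ‖α‖ ^ 2 := by nlinarith [norm_nonneg α]
    have hG : HasDerivAt (blaschkeFactor α ∘ f) (((1 - ‖α‖ ^ 2 : ℝ) : ℂ)⁻¹ * deriv f c) c :=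
      (hasDerivAt_blaschkeFactor_self hfc).comp c (hd.differentiableAt hball).hasDerivAt
    have hGd : DifferentiableOn ℂ (blaschkeFactor α ∘ f) (ball c 1) := fun z hz =>
      ((differentiableAt_blaschkeFactor (one_sub_conj_mul_ne_zero hfc (by simpa using hf hz))).comp
        z (hd.differentiableAt (isOpen_ball.mem_nhds hz))).differentiableWithinAt
    have hGmaps : MapsTo (blaschkeFactor α ∘ f) (ball c 1)
        (closedBall ((blaschkeFactor α ∘ f) c) 1) := fun z hz => by
      simpa [blaschkeFactor, α] using norm_blaschkeFactor_le_one hfc (by simpa using hf hz)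
    have hschwarz := Complex.norm_deriv_le_div_of_mapsTo_ball hGd hGmaps one_pos
    rw [hG.deriv, norm_mul, norm_inv, Complex.norm_real, Real.norm_of_nonneg hpos.le,
      div_one, inv_mul_le_iff₀ hpos, mul_one] at hschwarz
    exact hschwarz

section UnitDiskSeries

variable {c : ℕ → ℂ} {F : ℂ → ℂ}

lemma eball_one_eq_ball {X : Type*} [PseudoMetricSpace X] (x : X) : eball x 1 = ball x 1 := by
  simpa using eball_coe (x := x) (ε := 1)

theorem hasFPowerSeriesOnBall_ofScalars_of_hasSum
    (hc : ∀ z : ℂ, ‖z‖ < 1 → HasSum (fun n => c n * z ^ n) (F z)) :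
    HasFPowerSeriesOnBall F (ofScalars ℂ c) 0 1 where
  r_le := by
    refine ENNReal.le_of_forall_nnreal_lt fun s hs => ?_
    have hs : ‖((s : ℝ) : ℂ)‖ < 1 := by simpa using hs
    refine (ofScalars ℂ c).le_radius_of_tendsto (l := 0) ?_
    simpa [ofScalars_norm] using (hc _ hs).summable.tendsto_atTop_zero.norm
  r_pos := one_pos
  hasSum {y} hy := by
    have hy : ‖y‖ < 1 := by simpa [eball_one_eq_ball] using hy
    simpa [ofScalars_apply_eq, mul_comm] using hc y hy

theorem norm_coeff_one_le_one_sub_sq (hc : ∀ z : ℂ, ‖z‖ < 1 → HasSum (fun n => c n * z ^ n) (F z))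
    (hF : ∀ z : ℂ, ‖z‖ < 1 → ‖F z‖ ≤ 1) : ‖c 1‖ ≤ 1 - ‖c 0‖ ^ 2 := by
  have hp := hasFPowerSeriesOnBall_ofScalars_of_hasSum hc
  have hd : DifferentiableOn ℂ F (ball 0 1) := by
    simpa [eball_one_eq_ball] using hp.differentiableOn
  have hF0 : F 0 = c 0 := by
    simpa using (hp.hasFPowerSeriesAt.coeff_zero Fin.elim0).symm
  have hderiv : deriv F 0 = c 1 := by
    simpa [ofScalars_apply_eq] using hp.hasFPowerSeriesAt.deriv
  have := norm_deriv_le_one_sub_norm_sq hd fun z hz => by simpa using hF z (by simpa using hz)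
  rwa [hF0, hderiv] at this

theorem hasSum_multisection (hc : ∀ z : ℂ, ‖z‖ < 1 → HasSum (fun n => c n * z ^ n) (F z))
    {k : ℕ} {ω : ℂ} (hω : IsPrimitiveRoot ω k) (hk : 0 < k) {z : ℂ} (hz : ‖z‖ < 1) :
    HasSum (fun m => c (k * m) * (z ^ k) ^ m) ((k : ℂ)⁻¹ * ∑ j ∈ range k, F (ω ^ j * z)) := by
  have hrot : ∀ j ∈ range k, HasSum (fun n => c n * (ω ^ j * z) ^ n) (F (ω ^ j * z)) :=
    fun j _ => hc _ (by rwa [norm_mul, norm_pow, hω.norm'_eq_one hk.ne', one_pow, one_mul])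
  have hsum : HasSum (fun n => c n * z ^ n * if k ∣ n then (k : ℂ) else 0)
      (∑ j ∈ range k, F (ω ^ j * z)) := by
    refine (hasSum_sum hrot).congr_fun fun n => ?_
    rw [← hω.geom_sum_pow_eq_ite, Finset.mul_sum]
    refine Finset.sum_congr rfl fun j _ => ?_
    rw [mul_pow, ← pow_mul, ← pow_mul, mul_comm n j]
    ring
  have hinj : Function.Injective (k * ·) := fun _ _ h => Nat.eq_of_mul_eq_mul_left hk h
  have hsupp : ∀ n ∉ Set.range (k * ·), (c n * z ^ n * if k ∣ n then (k : ℂ) else 0) = 0 :=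
    fun n hn => by rw [if_neg fun ⟨m, hm⟩ => hn ⟨m, hm.symm⟩, mul_zero]
  refine (((hinj.hasSum_iff hsupp).mpr hsum).mul_left (k : ℂ)⁻¹).congr_fun fun m => ?_
  have hk' : (k : ℂ) ≠ 0 := Nat.cast_ne_zero.mpr hk.ne'
  simp only [Function.comp_apply, dvd_mul_right, if_true, ← pow_mul]
  field_simp

theorem norm_coeff_le_one_sub_sq (hc : ∀ z : ℂ, ‖z‖ < 1 → HasSum (fun n => c n * z ^ n) (F z))
    (hF : ∀ z : ℂ, ‖z‖ < 1 → ‖F z‖ ≤ 1) {k : ℕ} (hk : 0 < k) : ‖c k‖ ≤ 1 - ‖c 0‖ ^ 2 := by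
  have hω := Complex.isPrimitiveRoot_exp k hk.ne'
  set ω := Complex.exp (2 * Real.pi * Complex.I / k)
  set H : ℂ → ℂ := fun w => ∑' m, c (k * m) * w ^ m
  have hH : ∀ w : ℂ, ‖w‖ < 1 → HasSum (fun m => c (k * m) * w ^ m) (H w) ∧ ‖H w‖ ≤ 1 := by
    intro w hw
    obtain ⟨z, rfl⟩ := IsAlgClosed.exists_pow_nat_eq w hk
    have hz : ‖z‖ < 1 := by
      rwa [norm_pow, pow_lt_one_iff_of_nonneg (norm_nonneg z) hk.ne'] at hw
    have hsec := hasSum_multisection hc hω hk hz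
    refine ⟨hsec.summable.hasSum, ?_⟩
    rw [show H (z ^ k) = _ from hsec.tsum_eq]
    calc ‖(k : ℂ)⁻¹ * ∑ j ∈ range k, F (ω ^ j * z)‖
        ≤ (k : ℝ)⁻¹ * ∑ j ∈ range k, ‖F (ω ^ j * z)‖ := by
          rw [norm_mul, norm_inv, Complex.norm_natCast]
          gcongr
          exact norm_sum_le _ _
      _ ≤ (k : ℝ)⁻¹ * ∑ _j ∈ range k, 1 := by
          gcongr with j
          exact hF _ (by rwa [norm_mul, norm_pow, hω.norm'_eq_one hk.ne', one_pow, one_mul])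
      _ = 1 := by simp [hk.ne']
  simpa using norm_coeff_one_le_one_sub_sq (fun w hw => (hH w hw).1) fun w hw => (hH w hw).2

end UnitDiskSeries

theorem Complex.exists_norm_eq_one_norm_add_mul_eq (a b : ℂ) :
    ∃ u : ℂ, ‖u‖ = 1 ∧ ‖a + u * b‖ = ‖a‖ + ‖b‖ := by
  refine ⟨exp ((arg a - arg b : ℝ) * I), norm_exp_ofReal_mul_I _, ?_⟩
  have : a + exp ((arg a - arg b : ℝ) * I) * b = ((‖a‖ + ‖b‖ : ℝ) : ℂ) * exp (arg a * I) := by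
    calc a + exp ((arg a - arg b : ℝ) * I) * b
        = ‖a‖ * exp (arg a * I) + exp ((arg a - arg b : ℝ) * I) * (‖b‖ * exp (arg b * I)) := by
          rw [norm_mul_exp_arg_mul_I, norm_mul_exp_arg_mul_I]
      _ = ((‖a‖ + ‖b‖ : ℝ) : ℂ) * exp (arg a * I) := by
          push_cast
          rw [sub_mul, exp_sub]
          field_simp
  rw [this, norm_mul, norm_exp_ofReal_mul_I, norm_real, Real.norm_of_nonneg (by positivity),
    mul_one]

theorem norm_add_norm_coeff_le {a b : ℕ → ℂ} {h g : ℂ → ℂ}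
    (hh : ∀ z : ℂ, ‖z‖ < 1 → HasSum (fun n => a n * z ^ n) (h z))
    (hg : ∀ z : ℂ, ‖z‖ < 1 → HasSum (fun n => b n * z ^ n) (g z))
    (hbound : ∀ z : ℂ, ‖z‖ < 1 → ‖h z‖ + ‖g z‖ ≤ 1) (hb0 : b 0 = 0) {k : ℕ} (hk : 0 < k) :
    ‖a k‖ + ‖b k‖ ≤ 1 - ‖a 0‖ ^ 2 := by
  obtain ⟨u, hu, hk_eq⟩ := Complex.exists_norm_eq_one_norm_add_mul_eq (a k) (b k)
  have hsum : ∀ z : ℂ, ‖z‖ < 1 →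
      HasSum (fun n => (a n + u * b n) * z ^ n) (h z + u * g z) := fun z hz =>
    ((hh z hz).add ((hg z hz).mul_left u)).congr_fun fun n => by ring
  have hle : ∀ z : ℂ, ‖z‖ < 1 → ‖h z + u * g z‖ ≤ 1 := fun z hz =>
    calc ‖h z + u * g z‖ ≤ ‖h z‖ + ‖u * g z‖ := norm_add_le _ _
      _ = ‖h z‖ + ‖g z‖ := by rw [norm_mul, hu, one_mul]
      _ ≤ 1 := hbound z hz
  simpa [hb0, hk_eq] using norm_coeff_le_one_sub_sq hsum hle hk

lemma tsum_mul_pow_succ_le {d : ℕ → ℝ} {M r : ℝ} (hd : ∀ k, 0 ≤ d k) (hdM : ∀ k, d k ≤ M)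
    (hr0 : 0 ≤ r) (hr1 : r < 1) : ∑' k, d k * r ^ (k + 1) ≤ M * r / (1 - r) := by
  have hgeom : HasSum (fun k => M * r ^ (k + 1)) (M * r / (1 - r)) := by
    simpa [div_eq_mul_inv, pow_succ', mul_assoc] using
      (hasSum_geometric_of_lt_one hr0 hr1).mul_left (M * r)
  have hle : ∀ k, d k * r ^ (k + 1) ≤ M * r ^ (k + 1) := fun k =>
    mul_le_mul_of_nonneg_right (hdM k) (by positivity)
  exact hasSum_le hle
    (Summable.of_nonneg_of_le (fun k => by have := hd k; positivity) hle hgeom.summable).hasSum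
    hgeom

/-- Proposition 1 of Kayumov–Ponnusamy: if `h, g` are analytic on the unit disk with
`|h| + |g| ≤ 1` and `g(0) = 0`, then `|a₀| + ∑_{k≥1} (|aₖ| + |bₖ|) rᵏ ≤ 1` for
`r ≤ 1/3`. -/
theorem bohr_pair_inequality
    (a b : ℕ → ℂ) (h g : ℂ → ℂ)
    (hh : ∀ z : ℂ, ‖z‖ < 1 → HasSum (fun k : ℕ => a k * z ^ k) (h z))
    (hg : ∀ z : ℂ, ‖z‖ < 1 → HasSum (fun k : ℕ => b k * z ^ k) (g z))
    (hbound : ∀ z : ℂ, ‖z‖ < 1 → ‖h z‖ + ‖g z‖ ≤ 1)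
    (hb0 : b 0 = 0) :
    ∀ r : ℝ, 0 ≤ r → r ≤ 1 / 3 →
      ‖a 0‖ + (∑' k : ℕ, (‖a (k + 1)‖ + ‖b (k + 1)‖) * r ^ (k + 1)) ≤ 1 := by
  intro r hr0 hr13
  have hcoeff : ∀ k : ℕ, ‖a (k + 1)‖ + ‖b (k + 1)‖ ≤ 1 - ‖a 0‖ ^ 2 := fun k =>
    norm_add_norm_coeff_le hh hg hbound hb0 k.succ_pos
  have ha0 : ‖a 0‖ ≤ 1 := by
    nlinarith [hcoeff 0, norm_nonneg (a 1), norm_nonneg (b 1)]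
  have htail := tsum_mul_pow_succ_le (fun k => by positivity) hcoeff hr0 (by linarith)
  have hgeom : (1 - ‖a 0‖ ^ 2) * r / (1 - r) ≤ 1 - ‖a 0‖ := by
    rw [div_le_iff₀ (by linarith)]
    nlinarith [mul_nonneg (sub_nonneg.mpr ha0) (by linarith : (0 : ℝ) ≤ 1 - 3 * r),
      mul_nonneg hr0 (sq_nonneg (1 - ‖a 0‖))]
  linarith
end

section
/- For every real a > 0, the analytic functions h(z) = (z + a)/(2√(1 + a²)) and g(z) = (z − a)/(2√(1 + a²)) satisfy |h(z)| + |g(z)| < 1 for all z in the unit disk 𝔻, yet with a_0 = |h(0)|, a_1 = 1/(2√(1+a²)), b_0 = |g(0)|, b_1 = 1/(2√(1+a²)) denoting the moduli of their Taylor coefficients, one has (|a_0| + |b_0|) + (|a_1| + |b_1|) r > 1 for every r with √(1 + a²) − a < r < 1. In particular, since √(1+a²) − a → 0 as a → ∞, the Bohr inequality |a_0| + |b_0| + ∑_{k=1}^∞ (|a_k| + |b_k|) r^k ≤ 1 fails for pairs (h, g) with |h| + |g| ≤ 1 at every fixed positive radius without the assumption g(0) = 0. -/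
/-!
By the parallelogram law and Cauchy–Schwarz in `ℝ²`,
`|z + a| + |z - a| ≤ 2 √(|z|² + a²) < 2 √(1 + a²)` on the unit disk.
The Taylor data of the pair give `(|a₀| + |b₀|) + (|a₁| + |b₁|) r = (a + r) / √(1 + a²)`,
which exceeds `1` exactly when `r > √(1 + a²) - a`, and `√(1 + t²) - t = 1 / (√(1 + t²) + t) → 0`.
-/

open Filter

theorem norm_add_add_norm_sub_le_two_mul_sqrt {E : Type*} [NormedAddCommGroup E]
    [InnerProductSpace ℝ E] (x y : E) :
    ‖x + y‖ + ‖x - y‖ ≤ 2 * √(‖x‖ ^ 2 + ‖y‖ ^ 2) := by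
  have hpar := parallelogram_law_with_norm ℝ x y
  have hsq : √(‖x‖ ^ 2 + ‖y‖ ^ 2) ^ 2 = ‖x‖ ^ 2 + ‖y‖ ^ 2 := Real.sq_sqrt (by positivity)
  nlinarith [norm_nonneg (x + y), norm_nonneg (x - y), Real.sqrt_nonneg (‖x‖ ^ 2 + ‖y‖ ^ 2),
    sq_nonneg (‖x + y‖ - ‖x - y‖)]

theorem Complex.norm_add_ofReal_add_norm_sub_ofReal_lt {z : ℂ} (hz : ‖z‖ < 1) (a : ℝ) :
    ‖z + a‖ + ‖z - a‖ < 2 * √(1 + a ^ 2) := by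
  calc ‖z + a‖ + ‖z - a‖ ≤ 2 * √(‖z‖ ^ 2 + ‖(a : ℂ)‖ ^ 2) :=
        norm_add_add_norm_sub_le_two_mul_sqrt z (a : ℂ)
    _ < 2 * √(1 + a ^ 2) := by
        rw [Complex.norm_real, Real.norm_eq_abs, sq_abs]
        have hz2 : ‖z‖ ^ 2 < 1 := by nlinarith [norm_nonneg z]
        exact mul_lt_mul_of_pos_left (Real.sqrt_lt_sqrt (by positivity) (by linarith)) two_pos

theorem Real.sqrt_one_add_sq_sub_self (t : ℝ) : √(1 + t ^ 2) - t = (√(1 + t ^ 2) + t)⁻¹ := by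
  refine eq_inv_of_mul_eq_one_left ?_
  rw [mul_comm, ← sq_sub_sq, Real.sq_sqrt (by positivity)]
  ring

theorem Real.tendsto_sqrt_one_add_sq_sub_self_atTop :
    Tendsto (fun t : ℝ => √(1 + t ^ 2) - t) atTop (nhds 0) := by
  simp_rw [Real.sqrt_one_add_sq_sub_self]
  refine Tendsto.inv_tendsto_atTop (tendsto_atTop_mono (fun t => ?_) tendsto_id)
  simp [Real.sqrt_nonneg]

/-- The condition `g(0) = 0` in the Bohr inequality for pairs cannot be dropped:
for every `a > 0` the pair `h(z) = (z+a)/(2√(1+a²))`, `g(z) = (z−a)/(2√(1+a²))`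
satisfies `|h| + |g| < 1` on the unit disk, yet
`(|a₀| + |b₀|) + (|a₁| + |b₁|) r > 1` for every `√(1+a²) − a < r < 1`;
moreover `√(1+a²) − a → 0` as `a → ∞`, so no positive Bohr radius is possible. -/
theorem bohr_pair_needs_g0
    (a : ℝ) (ha : 0 < a)
    (h g : ℂ → ℂ)
    (hh : ∀ z : ℂ, h z = (z + (a : ℂ)) / (2 * Real.sqrt (1 + a ^ 2)))
    (hg : ∀ z : ℂ, g z = (z - (a : ℂ)) / (2 * Real.sqrt (1 + a ^ 2))) :
    (∀ z : ℂ, ‖z‖ < 1 → ‖h z‖ + ‖g z‖ < 1) ∧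
    (∀ r : ℝ, Real.sqrt (1 + a ^ 2) - a < r → r < 1 →
      1 < (‖h 0‖ + ‖g 0‖) +
        (1 / (2 * Real.sqrt (1 + a ^ 2)) + 1 / (2 * Real.sqrt (1 + a ^ 2))) * r) ∧
    Filter.Tendsto (fun t : ℝ => Real.sqrt (1 + t ^ 2) - t)
      Filter.atTop (nhds 0) := by
  set s := √(1 + a ^ 2)
  have hs : 0 < s := Real.sqrt_pos.mpr (by positivity)
  have hden : ‖(2 * s : ℂ)‖ = 2 * s := by
    rw [← Complex.ofReal_ofNat, ← Complex.ofReal_mul, Complex.norm_real,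
      Real.norm_of_nonneg (by positivity)]
  refine ⟨fun z hz => ?_, fun r hr _ => ?_, Real.tendsto_sqrt_one_add_sq_sub_self_atTop⟩
  · rw [hh, hg, norm_div, norm_div, hden, ← add_div, div_lt_one (by positivity)]
    exact Complex.norm_add_ofReal_add_norm_sub_ofReal_lt hz a
  · have hsum : (‖h 0‖ + ‖g 0‖) + (1 / (2 * s) + 1 / (2 * s)) * r = (a + r) / s := by
      rw [hh, hg, norm_div, norm_div, hden, zero_add, zero_sub, norm_neg, Complex.norm_real,
        Real.norm_of_nonneg ha.le]
      field_simp
      ring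
    rw [hsum, one_lt_div hs]
    linarith
end
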